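/- arXiv:1810.05117 — 2 statements merged into one kernel-verified Lean document; each statement's English description precedes it below -/
import Mathlib

section
/- For every K ≥ 1 there exists c = c(K) > 0 such that for every Λ ≥ 1 there exists C = C(K,Λ) > 0 with the following property: for every φ ∈ C²(ℝ) satisfying 1/K ≤ φ(x) ≤ K for all x and ‖∂ₓφ‖_{L^∞} + ‖∂ₓ²φ‖_{L^∞} ≤ Λ, and for every Schwartz function w : ℝ → ℝ, one has −∫_ℝ φ(x)^{−2} (∂ₓ⁴w)(x) w(x) dx ≤ −c ‖w‖_{H²}² + C ‖w‖_{L²}². -/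
open MeasureTheory Set Filter
open scoped Topology ENNReal

noncomputable section

namespace KdVPaper

/-- The Fourier transform of (the complexification of) a real-valued function on `ℝ`. -/
def FT (u : ℝ → ℝ) : ℝ → ℂ := FourierTransform.fourier (fun x => (u x : ℂ))

/-- The integrand of the squared Sobolev `H^s` norm. -/
def hsInt (s : ℝ) (u : ℝ → ℝ) (ξ : ℝ) : ℝ := (1 + ξ ^ 2) ^ s * ‖FT u ξ‖ ^ 2

/-- Membership in the Sobolev space `H^s(ℝ)`. -/
def MemHs (s : ℝ) (u : ℝ → ℝ) : Prop := Integrable (hsInt s u)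

/-- The Sobolev `H^s` norm. -/
def sobolevNorm (s : ℝ) (u : ℝ → ℝ) : ℝ := (∫ ξ : ℝ, hsInt s u ξ) ^ ((1 : ℝ) / 2)

/-- Points of `ℝ⁶`, with coordinates `(z₃, z₂, z₁, z₀, x, t)`. -/
abbrev R6 : Type := Fin 6 → ℝ

/-- Partial derivative of `F : ℝ⁶ → ℝ` in the `i`-th coordinate. -/
def pd (i : Fin 6) (F : R6 → ℝ) : R6 → ℝ :=
  fun p => deriv (fun s : ℝ => F (Function.update p i s)) (p i)

/-- Iterated partial derivatives, in the coordinates listed in `l`. -/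
def pdL : List (Fin 6) → (R6 → ℝ) → R6 → ℝ
  | [], F => F
  | i :: l, F => pd i (pdL l F)

/-- The number of `z`-derivatives occurring in the list `l`. -/
def zCount (l : List (Fin 6)) : ℕ := (l.filter fun i => (i : ℕ) < 4).length

/-- Admissible derivative lists: at most `nz` derivatives in `z = (z₃,z₂,z₁,z₀)`,
at most `nx` in `x`, and at most `nt` in `t`. -/
def AdmN (nz nx nt : ℕ) (l : List (Fin 6)) : Prop :=
  zCount l ≤ nz ∧ l.count (4 : Fin 6) ≤ nx ∧ l.count (5 : Fin 6) ≤ nt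

/-- `F` has all partial derivatives of admissible orders; they are continuous, and for
`|z| ≤ k`, `x ∈ ℝ`, `t ∈ [-1,1]` they are bounded by an increasing constant `C(k)`. -/
def HasBddPartials (F : R6 → ℝ) (P : List (Fin 6) → Prop) : Prop :=
  (∀ (l : List (Fin 6)) (i : Fin 6), P (i :: l) → ∀ p : R6,
      DifferentiableAt ℝ (fun s : ℝ => pdL l F (Function.update p i s)) (p i)) ∧
  (∀ l : List (Fin 6), P l → Continuous (pdL l F)) ∧
  ∃ C : ℝ → ℝ, Monotone C ∧ ∀ l : List (Fin 6), P l → ∀ k : ℝ, 0 < k →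
    ∀ p : R6, (∀ i : Fin 6, (i : ℕ) ≤ 3 → |p i| ≤ k) → |p 5| ≤ 1 →
      |pdL l F p| ≤ C k

/-- Condition (A1): `f ∈ C¹ₜ C¹¹_z W^{11,∞}ₓ` with bounds `C(k)` on `|z| ≤ k`. -/
def CondA1 (F : R6 → ℝ) : Prop := HasBddPartials F (AdmN 11 11 1)

/-- Iterated spatial derivative `∂ₓⁿ u(t,·)(x)` of a time-dependent function. -/
def dxs (n : ℕ) (u : ℝ → ℝ → ℝ) (t x : ℝ) : ℝ := iteratedDeriv n (u t) x

/-- Time derivative (within the time interval `I`). -/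
def dtv (I : Set ℝ) (u : ℝ → ℝ → ℝ) (t x : ℝ) : ℝ := derivWithin (fun s => u s x) I t

/-- The vector `(∂ₓ³u, ∂ₓ²u, ∂ₓu, u, x, t)`. -/
def evalVec (u : ℝ → ℝ → ℝ) (t x : ℝ) : R6 :=
  ![dxs 3 u t x, dxs 2 u t x, dxs 1 u t x, u t x, x, t]

/-- The vector `(∂ₓ³u₀, ∂ₓ²u₀, ∂ₓu₀, u₀, x, 0)` built from initial data. -/
def evalVec0 (u₀ : ℝ → ℝ) (x : ℝ) : R6 :=
  ![iteratedDeriv 3 u₀ x, iteratedDeriv 2 u₀ x, iteratedDeriv 1 u₀ x, u₀ x, x, 0]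

/-- Condition (A2): the modified diffusion ratio `f_{z₂}/f_{z₃}` has the form
`∂ₓ[g_D(∂ₓ²u,∂ₓu,u,x,t)] + g_H(∂ₓ³u,∂ₓ²u,∂ₓu,u,x,t)` where `g_H` vanishes to second
order at `z = 0`. -/
def CondA2 (F : R6 → ℝ) : Prop :=
  ∃ gD gH : R6 → ℝ,
    (∀ (p : R6) (s : ℝ), gD (Function.update p 0 s) = gD p) ∧
    HasBddPartials gD (AdmN 0 0 1) ∧
    HasBddPartials gH (AdmN 2 0 1) ∧
    (∀ p : R6, gH ![0, 0, 0, 0, p 4, p 5] = 0) ∧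
    (∀ j : Fin 6, (j : ℕ) ≤ 3 → ∀ p : R6, pd j gH ![0, 0, 0, 0, p 4, p 5] = 0) ∧
    ∀ u : ℝ → ℝ → ℝ, (∀ t : ℝ, ContDiff ℝ 4 (u t)) → ∀ t x : ℝ,
      pd 1 F (evalVec u t x) / pd 0 F (evalVec u t x) =
        deriv (fun y => gD (evalVec u t y)) x + gH (evalVec u t x)

/-- Condition (A3): `f(0,x,t) = 0`. -/
def CondA3 (F : R6 → ℝ) : Prop := ∀ x t : ℝ, F ![0, 0, 0, 0, x, t] = 0

/-- Continuity of `t ∈ I ↦ u(t,·) ∈ H^s`. -/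
def ContHs (s : ℝ) (I : Set ℝ) (u : ℝ → ℝ → ℝ) : Prop :=
  (∀ t ∈ I, MemHs s (u t)) ∧
  ∀ t ∈ I, ∀ ε : ℝ, 0 < ε → ∃ δ : ℝ, 0 < δ ∧ ∀ t' ∈ I, |t' - t| < δ →
    sobolevNorm s (fun x => u t' x - u t x) < ε

/-- Classical solution of `∂ₜu = f(∂ₓ³u, ∂ₓ²u, ∂ₓu, u, x, t)` on the time interval `I`. -/
def IsSol (F : R6 → ℝ) (I : Set ℝ) (u : ℝ → ℝ → ℝ) : Prop :=
  (∀ t ∈ I, ContDiff ℝ 3 (u t)) ∧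
  ∀ t ∈ I, ∀ x : ℝ, HasDerivWithinAt (fun s => u s x) (F (evalVec u t x)) I t

/-- Classical solution of `∂ₜu + f(∂ₓ³u, ∂ₓ²u, ∂ₓu, u, x, t) = -ε ∂ₓ⁴u` on `I`,
whose spatial sections are `Cⁿ`. -/
def IsRegSol (F : R6 → ℝ) (ε : ℝ) (I : Set ℝ) (n : ℕ) (u : ℝ → ℝ → ℝ) : Prop :=
  (∀ t ∈ I, ContDiff ℝ (n : ℕ∞) (u t)) ∧
  ∀ t ∈ I, ∀ x : ℝ,
    HasDerivWithinAt (fun s => u s x) (-F (evalVec u t x) - ε * dxs 4 u t x) I t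

/-- The dispersion quantity `λ(t) = ‖1/f_{z₃}(∂ₓ³u,…,x,t)‖_{L^∞ₓ}`. -/
def lam (F : R6 → ℝ) (u : ℝ → ℝ → ℝ) (t : ℝ) : ℝ := ⨆ x : ℝ, |1 / pd 0 F (evalVec u t x)|

/-- The dispersion quantity of the initial data. -/
def lam0 (F : R6 → ℝ) (u₀ : ℝ → ℝ) : ℝ := ⨆ x : ℝ, |1 / pd 0 F (evalVec0 u₀ x)|

/-- `M_ε(t) = sup_{0≤t'≤t} ‖u(t')‖_{H⁷} + ε sup_{0≤t'≤t} ‖u(t')‖_{H⁸}`. -/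
def Meps (ε : ℝ) (u : ℝ → ℝ → ℝ) (t : ℝ) : ℝ :=
  sSup ((fun t' => sobolevNorm 7 (u t')) '' Icc 0 t)
    + ε * sSup ((fun t' => sobolevNorm 8 (u t')) '' Icc 0 t)

/-- `k(t) = sup_{0≤t'≤t} max (‖u(t')‖_{H⁴}) (λ(t'))`. -/
def kfun (F : R6 → ℝ) (u : ℝ → ℝ → ℝ) (t : ℝ) : ℝ :=
  sSup ((fun t' => max (sobolevNorm 4 (u t')) (lam F u t')) '' Icc 0 t)

/-- A smooth cutoff `φ : [0,∞) → [0,1]` with `φ ≡ 1` on `[0,1]` and `φ ≡ 0` on `[2,∞)`. -/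
def IsCutoff (φ : ℝ → ℝ) : Prop :=
  ContDiff ℝ (⊤ : ℕ∞) φ ∧ (∀ r : ℝ, φ r ∈ Icc (0 : ℝ) 1) ∧ (∀ r : ℝ, r ≤ 1 → φ r = 1) ∧
    ∀ r : ℝ, 2 ≤ r → φ r = 0

/-- `v = (u₀)_δ`: the Fourier regularization of the data, `v̂(ξ) = û₀(ξ) φ(δ|ξ|)`. -/
def IsRegData (φ : ℝ → ℝ) (u₀ : ℝ → ℝ) (δ : ℝ) (v : ℝ → ℝ) : Prop :=
  ∀ ξ : ℝ, FT v ξ = FT u₀ ξ * (φ (δ * |ξ|) : ℂ)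

/-- Increasing function on `[0,∞)`. -/
def Incr1 (C : ℝ → ℝ) : Prop := MonotoneOn C (Ici 0)

/-- Function on `[0,∞)²` increasing in each argument. -/
def Incr2 (C : ℝ → ℝ → ℝ) : Prop :=
  (∀ a ∈ Ici (0 : ℝ), MonotoneOn (fun b => C a b) (Ici 0)) ∧
  ∀ b ∈ Ici (0 : ℝ), MonotoneOn (fun a => C a b) (Ici 0)

end KdVPaper

namespace KdVPaper

section AuxGauge

open Complex SchwartzMap MeasureTheory Real
open scoped FourierTransform RealInnerProductSpace

private lemma schwartz_bound {F : Type*} [NormedAddCommGroup F] [NormedSpace ℝ F]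
    (f : 𝓢(ℝ, F)) : ∃ C, 0 < C ∧ ∀ x, ‖f x‖ ≤ C := by
  obtain ⟨C, hC, h⟩ := f.decay 0 0
  exact ⟨C, hC, fun x => by simpa using h x⟩

private lemma int_mul (f g : 𝓢(ℝ, ℝ)) : Integrable (fun x => f x * g x) := by
  obtain ⟨C, _, hC⟩ := schwartz_bound f
  exact g.integrable.bdd_mul f.continuous.aestronglyMeasurable (Filter.Eventually.of_forall hC)

private lemma int_bmul {b : ℝ → ℝ} {C : ℝ} (hb : AEStronglyMeasurable b)
    (hC : ∀ x, |b x| ≤ C) (f g : 𝓢(ℝ, ℝ)) :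
    Integrable (fun x => b x * (f x * g x)) :=
  (int_mul f g).bdd_mul (c := C) hb (Filter.Eventually.of_forall fun x => by simpa using hC x)

private lemma sq_int (f : 𝓢(ℝ, ℝ)) : Integrable (fun x => f x ^ 2) := by
  simpa [sq] using int_mul f f

private lemma normsq_int (f : 𝓢(ℝ, ℂ)) : Integrable (fun x => ‖f x‖ ^ 2) := by
  obtain ⟨C, _, hC⟩ := schwartz_bound f
  have h := (f.integrable (μ := volume)).norm.bdd_mul
    (c := C) (f.continuous.norm.aestronglyMeasurable) (Filter.Eventually.of_forall fun x => by simpa using hC x)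
  simpa [sq] using h

private lemma integrable_conj' {F : ℝ → ℂ} (h : Integrable F) :
    Integrable fun x => (starRingEnd ℂ) (F x) := by
  refine ⟨continuous_star.comp_aestronglyMeasurable h.1, ?_⟩
  rw [hasFiniteIntegral_iff_norm]
  simpa [hasFiniteIntegral_iff_norm] using h.2

private def cplx (f : 𝓢(ℝ, ℝ)) : 𝓢(ℝ, ℂ) :=
  bilinLeftCLM (ContinuousLinearMap.lsmul ℝ ℝ : ℝ →L[ℝ] ℂ →L[ℝ] ℂ)
    (Function.HasTemperateGrowth.const (1 : ℂ)) f

private lemma cplx_apply (f : 𝓢(ℝ, ℝ)) (x : ℝ) : cplx f x = (f x : ℂ) := by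
  simp [cplx, bilinLeftCLM]
  rfl

private lemma hasDerivAt_schwartz (f : 𝓢(ℝ, ℝ)) (x : ℝ) :
    HasDerivAt ⇑f (SchwartzMap.derivCLM ℝ ℝ f x) x := by
  simpa [SchwartzMap.derivCLM_apply] using
    (((f.smooth 1).differentiable (by norm_num)) x).hasDerivAt

private lemma cplx_deriv (f : 𝓢(ℝ, ℝ)) :
    deriv ⇑(cplx f) = ⇑(cplx (SchwartzMap.derivCLM ℝ ℝ f)) := by
  funext x
  have h : HasDerivAt (fun y => ((f y : ℝ) : ℂ)) ((SchwartzMap.derivCLM ℝ ℝ f x : ℝ) : ℂ) x :=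
    (hasDerivAt_schwartz f x).ofReal_comp
  have hfun : ⇑(cplx f) = fun y => ((f y : ℝ) : ℂ) := funext fun y => cplx_apply f y
  rw [hfun, h.deriv, cplx_apply]

private lemma conj_fourierIntegral (h : ℝ → ℂ) (w : ℝ) :
    𝓕 (fun x => (starRingEnd ℂ) (h x)) w = (starRingEnd ℂ) (𝓕⁻ h w) := by
  rw [Real.fourier_eq', Real.fourierInv_eq', ← integral_conj]
  congr 1
  funext v
  simp only [smul_eq_mul, map_mul, ← Complex.exp_conj, Complex.conj_I, map_ofNat,
    Complex.conj_ofReal]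
  congr 2
  push_cast
  ring

private lemma plancherel (f : 𝓢(ℝ, ℂ)) :
    ∫ ξ : ℝ, ‖𝓕 ⇑f ξ‖ ^ 2 = ∫ x : ℝ, ‖f x‖ ^ 2 := by
  have hf : Integrable ⇑f := f.integrable
  have hFfS : 𝓕 ⇑f = ⇑(SchwartzMap.fourierTransformCLM ℂ f) :=
    (SchwartzMap.fourierTransformCLM_apply ℂ f).symm ▸ rfl
  have hFf : Integrable (𝓕 ⇑f) := by
    rw [hFfS]; exact (SchwartzMap.fourierTransformCLM ℂ f).integrable
  have hg : Integrable (fun ξ => (starRingEnd ℂ) (𝓕 ⇑f ξ)) := integrable_conj' hFf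
  have hL : Continuous fun p : ℝ × ℝ => (innerₗ ℝ) p.1 p.2 := continuous_inner
  have key := VectorFourier.integral_bilin_fourierIntegral_eq_flip
    (ContinuousLinearMap.mul ℂ ℂ) Real.continuous_fourierChar hL hf hg
  have hflip : (innerₗ ℝ).flip = innerₗ ℝ := by
    apply LinearMap.ext; intro x; apply LinearMap.ext; intro y
    rw [LinearMap.flip_apply]
    exact real_inner_comm x y
  rw [hflip] at key
  have hVF : ∀ h : ℝ → ℂ, VectorFourier.fourierIntegral (Real.fourierChar) volume (innerₗ ℝ) h
      = 𝓕 h := fun h => rfl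
  rw [hVF, hVF] at key
  simp only [ContinuousLinearMap.mul_apply'] at key
  have hinv : ∀ x, 𝓕⁻ (𝓕 ⇑f) x = f x := fun x =>
    hf.fourierInv_fourier_eq hFf (f.continuous.continuousAt)
  have key2 : ∫ ξ, 𝓕 ⇑f ξ * (starRingEnd ℂ) (𝓕 ⇑f ξ) = ∫ x, f x * (starRingEnd ℂ) (f x) := by
    rw [key]
    congr 1
    funext x
    rw [conj_fourierIntegral, hinv]
  have e1 : ∫ ξ : ℝ, ((‖𝓕 ⇑f ξ‖ ^ 2 : ℝ) : ℂ) = ((∫ ξ : ℝ, ‖𝓕 ⇑f ξ‖ ^ 2 : ℝ) : ℂ) :=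
    integral_ofReal
  have e2 : ∫ x : ℝ, ((‖f x‖ ^ 2 : ℝ) : ℂ) = ((∫ x : ℝ, ‖f x‖ ^ 2 : ℝ) : ℂ) :=
    integral_ofReal
  have hcast : (↑(∫ ξ : ℝ, ‖𝓕 ⇑f ξ‖ ^ 2) : ℂ) = ↑(∫ x : ℝ, ‖f x‖ ^ 2) := by
    rw [← e1, ← e2]
    calc ∫ ξ : ℝ, ((‖𝓕 ⇑f ξ‖ ^ 2 : ℝ) : ℂ)
        = ∫ ξ, 𝓕 ⇑f ξ * (starRingEnd ℂ) (𝓕 ⇑f ξ) := by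
          congr 1; funext ξ; rw [Complex.mul_conj']; push_cast; ring
      _ = ∫ x, f x * (starRingEnd ℂ) (f x) := key2
      _ = ∫ x : ℝ, ((‖f x‖ ^ 2 : ℝ) : ℂ) := by
          congr 1; funext x; rw [Complex.mul_conj']; push_cast; ring
  exact_mod_cast hcast

private lemma FT_eq (f : 𝓢(ℝ, ℝ)) : FT ⇑f = 𝓕 ⇑(cplx f) := by
  funext ξ
  unfold FT
  rw [show (⇑(cplx f)) = fun x => ((f x : ℝ) : ℂ) from funext fun x => cplx_apply f x]

private lemma plancherel_real (f : 𝓢(ℝ, ℝ)) :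
    ∫ ξ : ℝ, ‖FT ⇑f ξ‖ ^ 2 = ∫ x : ℝ, (f x) ^ 2 := by
  rw [FT_eq, plancherel]
  congr 1
  funext x
  rw [cplx_apply, Complex.norm_real, Real.norm_eq_abs, _root_.sq_abs]

private lemma cplx_it2 (w : 𝓢(ℝ, ℝ)) :
    iteratedDeriv 2 ⇑(cplx w) =
      ⇑(cplx (SchwartzMap.derivCLM ℝ ℝ (SchwartzMap.derivCLM ℝ ℝ w))) := by
  rw [show (2 : ℕ) = 0 + 1 + 1 from rfl, iteratedDeriv_succ', iteratedDeriv_succ',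
    iteratedDeriv_zero, cplx_deriv, cplx_deriv]

private lemma FT_two (w : 𝓢(ℝ, ℝ)) (ξ : ℝ) :
    ‖FT ⇑(SchwartzMap.derivCLM ℝ ℝ (SchwartzMap.derivCLM ℝ ℝ w)) ξ‖ ^ 2
      = 16 * π ^ 4 * ξ ^ 4 * ‖FT ⇑w ξ‖ ^ 2 := by
  have h := Real.fourier_iteratedDeriv (f := ⇑(cplx w)) (N := (2 : ℕ∞)) (n := 2)
    ((cplx w).smooth _)
    (fun n hn => by
      have hn' : n ≤ 2 := by exact_mod_cast hn
      interval_cases n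
      · simpa [iteratedDeriv_zero] using ((cplx w).integrable (μ := volume))
      · rw [iteratedDeriv_one, cplx_deriv]
        exact (cplx (SchwartzMap.derivCLM ℝ ℝ w)).integrable
      · rw [cplx_it2]
        exact (cplx (SchwartzMap.derivCLM ℝ ℝ (SchwartzMap.derivCLM ℝ ℝ w))).integrable)
    le_rfl
  have h' := congrFun h ξ
  rw [FT_eq, ← cplx_it2, h', FT_eq w]
  have hc : ‖(2 * (π : ℂ) * I * (ξ : ℂ))‖ = 2 * π * |ξ| := by
    simp [norm_mul, abs_of_pos Real.pi_pos]
  rw [norm_smul, norm_pow, hc]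
  have habs : |ξ| ^ 4 = ξ ^ 4 := by
    rw [← _root_.abs_pow]; exact abs_of_nonneg (by positivity)
  rw [← habs]; ring

private lemma sobolevNorm_sq (s : ℝ) (u : ℝ → ℝ) :
    sobolevNorm s u ^ 2 = ∫ ξ : ℝ, hsInt s u ξ := by
  have h0 : 0 ≤ ∫ ξ : ℝ, hsInt s u ξ := by
    apply integral_nonneg
    intro ξ
    unfold hsInt
    positivity
  rw [sobolevNorm, ← Real.rpow_natCast (_ ^ ((1:ℝ)/2)) 2, ← Real.rpow_mul h0]
  norm_num

private lemma sobolev0_eq (w : 𝓢(ℝ, ℝ)) :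
    sobolevNorm 0 ⇑w ^ 2 = ∫ x : ℝ, (w x) ^ 2 := by
  rw [sobolevNorm_sq, ← plancherel_real]
  congr 1
  funext ξ
  unfold hsInt
  rw [Real.rpow_zero, one_mul]

private lemma sobolev2_le (w : 𝓢(ℝ, ℝ)) :
    sobolevNorm 2 ⇑w ^ 2 ≤ 2 * (∫ x : ℝ, (w x) ^ 2)
      + (1 / (8 * π ^ 4)) *
        ∫ x : ℝ, ((SchwartzMap.derivCLM ℝ ℝ (SchwartzMap.derivCLM ℝ ℝ w)) x) ^ 2 := by
  set w2 := SchwartzMap.derivCLM ℝ ℝ (SchwartzMap.derivCLM ℝ ℝ w) with hw2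
  have hFT0 : FT ⇑w = ⇑(SchwartzMap.fourierTransformCLM ℂ (cplx w)) := by
    rw [FT_eq]; exact ((SchwartzMap.fourierTransformCLM_apply ℂ (cplx w)).symm ▸ rfl)
  have hFT2 : FT ⇑w2 = ⇑(SchwartzMap.fourierTransformCLM ℂ (cplx w2)) := by
    rw [FT_eq]; exact ((SchwartzMap.fourierTransformCLM_apply ℂ (cplx w2)).symm ▸ rfl)
  have hint0 : Integrable (fun ξ : ℝ => ‖FT ⇑w ξ‖ ^ 2) := by
    rw [hFT0]; exact normsq_int _
  have hint2 : Integrable (fun ξ : ℝ => ‖FT ⇑w2 ξ‖ ^ 2) := by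
    rw [hFT2]; exact normsq_int _
  have hrhs : Integrable (fun ξ : ℝ =>
      2 * ‖FT ⇑w ξ‖ ^ 2 + (1 / (8 * π ^ 4)) * ‖FT ⇑w2 ξ‖ ^ 2) :=
    (hint0.const_mul 2).add (hint2.const_mul _)
  have hmono : ∫ ξ : ℝ, hsInt 2 ⇑w ξ ≤
      ∫ ξ : ℝ, (2 * ‖FT ⇑w ξ‖ ^ 2 + (1 / (8 * π ^ 4)) * ‖FT ⇑w2 ξ‖ ^ 2) := by
    apply integral_mono_of_nonneg
    · filter_upwards with ξ
      unfold hsInt; positivity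
    · exact hrhs
    · filter_upwards with ξ
      unfold hsInt
      rw [show ((1:ℝ)+ξ^2) ^ (2:ℝ) = ((1:ℝ)+ξ^2)^(2:ℕ) from by
        rw [← Real.rpow_natCast]; norm_num, FT_two]
      have hpi := Real.pi_pos
      have h1 : (1 / (8 * π ^ 4)) * (16 * π ^ 4 * ξ ^ 4 * ‖FT ⇑w ξ‖ ^ 2)
          = 2 * ξ ^ 4 * ‖FT ⇑w ξ‖ ^ 2 := by
        field_simp
        ring
      rw [h1]
      nlinarith [mul_nonneg (sq_nonneg (ξ^2 - 1)) (sq_nonneg ‖FT ⇑w ξ‖)]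
  rw [sobolevNorm_sq]
  calc ∫ ξ : ℝ, hsInt 2 ⇑w ξ
      ≤ ∫ ξ : ℝ, (2 * ‖FT ⇑w ξ‖ ^ 2 + (1 / (8 * π ^ 4)) * ‖FT ⇑w2 ξ‖ ^ 2) := hmono
    _ = 2 * (∫ ξ : ℝ, ‖FT ⇑w ξ‖ ^ 2) + (1 / (8 * π ^ 4)) * ∫ ξ : ℝ, ‖FT ⇑w2 ξ‖ ^ 2 := by
        rw [integral_add (hint0.const_mul 2) (hint2.const_mul _),
          integral_const_mul, integral_const_mul]
    _ = 2 * (∫ x : ℝ, (w x) ^ 2) + (1 / (8 * π ^ 4)) * ∫ x : ℝ, (w2 x) ^ 2 := by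
        rw [plancherel_real, plancherel_real]

end AuxGauge

section MainAux
open Complex SchwartzMap MeasureTheory Real
open scoped FourierTransform

private lemma amgm {m a b : ℝ} (hm : 0 < m) :
    |a * b| ≤ m / 2 * a ^ 2 + 1 / (2 * m) * b ^ 2 := by
  have key : 2 * m * (|a| * |b|) ≤ 2 * m * (m / 2 * a ^ 2 + 1 / (2 * m) * b ^ 2) := by
    have hexp : 2 * m * (m / 2 * a ^ 2 + 1 / (2 * m) * b ^ 2) = m ^ 2 * a ^ 2 + b ^ 2 := by
      field_simp
    rw [hexp]
    nlinarith [sq_nonneg (m * |a| - |b|), _root_.sq_abs a, _root_.sq_abs b]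
  have h2 := (mul_le_mul_iff_right₀ (by linarith : (0:ℝ) < 2 * m)).mp key
  rw [abs_mul]
  linarith [h2]

private lemma ibp {u v u' v' : ℝ → ℝ}
    (hu : ∀ x, HasDerivAt u (u' x) x) (hv : ∀ x, HasDerivAt v (v' x) x)
    (h1 : Integrable (fun x => u x * v' x)) (h2 : Integrable (fun x => u' x * v x))
    (h3 : Integrable (fun x => u x * v x)) :
    ∫ x : ℝ, u x * v' x = -∫ x : ℝ, u' x * v x :=
  MeasureTheory.integral_mul_deriv_eq_deriv_mul_of_integrable (fun x _ => hu x) (fun x _ => hv x) h1 h2 h3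

private lemma Jbound {b : ℝ → ℝ} {Cb : ℝ} (hCb : 0 ≤ Cb)
    (hb : AEStronglyMeasurable b) (hC : ∀ x, |b x| ≤ Cb) (f g : 𝓢(ℝ, ℝ))
    {m : ℝ} (hm : 0 < m) :
    |∫ x : ℝ, b x * (f x * g x)| ≤
      Cb * (m / 2 * (∫ x : ℝ, (g x) ^ 2) + 1 / (2 * m) * ∫ x : ℝ, (f x) ^ 2) := by
  have h1 : |∫ x : ℝ, b x * (f x * g x)| ≤ ∫ x : ℝ, |b x * (f x * g x)| := by
    have := norm_integral_le_integral_norm (μ := volume) (fun x : ℝ => b x * (f x * g x))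
    simp only [Real.norm_eq_abs] at this
    exact this
  refine h1.trans ?_
  have hintg : Integrable (fun x : ℝ => Cb * (m / 2 * (g x) ^ 2 + 1 / (2 * m) * (f x) ^ 2)) :=
    (((sq_int g).const_mul _).add ((sq_int f).const_mul _)).const_mul Cb
  have h2 : ∫ x : ℝ, |b x * (f x * g x)|
      ≤ ∫ x : ℝ, Cb * (m / 2 * (g x) ^ 2 + 1 / (2 * m) * (f x) ^ 2) := by
    refine integral_mono_of_nonneg (Filter.Eventually.of_forall fun x => abs_nonneg _) hintg
      (Filter.Eventually.of_forall fun x => ?_)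
    dsimp only
    rw [abs_mul]
    have hab : |f x * g x| ≤ m / 2 * (g x) ^ 2 + 1 / (2 * m) * (f x) ^ 2 := by
      rw [mul_comm]; exact amgm hm
    exact mul_le_mul (hC x) hab (abs_nonneg _) hCb
  refine h2.trans_eq ?_
  rw [integral_const_mul, integral_add ((sq_int g).const_mul _) ((sq_int f).const_mul _),
    integral_const_mul, integral_const_mul]

end MainAux

section Main
open Complex SchwartzMap MeasureTheory Real
open scoped FourierTransform




set_option maxHeartbeats 1000000 in
/-- A bounded gauge does not destroy the parabolic term: for `1/K ≤ φ ≤ K`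
with `‖φ'‖_∞ + ‖φ''‖_∞ ≤ Λ`, one has
`-∫ φ⁻² (∂ₓ⁴w) w ≤ -c‖w‖²_{H²} + C‖w‖²_{L²}` for all Schwartz `w`. -/
theorem gauged_parabolic_term :
    ∀ K : ℝ, 1 ≤ K → ∃ c : ℝ, 0 < c ∧ ∀ Λ : ℝ, 1 ≤ Λ → ∃ C : ℝ, 0 < C ∧
      ∀ φ : ℝ → ℝ, ContDiff ℝ 2 φ → (∀ x : ℝ, 1 / K ≤ φ x ∧ φ x ≤ K) →
        (∀ x y : ℝ, |deriv φ x| + |iteratedDeriv 2 φ y| ≤ Λ) →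
        ∀ w : SchwartzMap ℝ ℝ,
          -(∫ x : ℝ, (φ x ^ 2)⁻¹ * iteratedDeriv 4 (⇑w) x * w x) ≤
            -c * sobolevNorm 2 (⇑w) ^ 2 + C * sobolevNorm 0 (⇑w) ^ 2 := by
  intro K hK
  have hK0 : (0:ℝ) < K := lt_of_lt_of_le one_pos hK
  refine ⟨4 * Real.pi ^ 4 / K ^ 2, by positivity, ?_⟩
  intro Λ hΛ
  have hΛ0 : (0:ℝ) < Λ := lt_of_lt_of_le one_pos hΛ
  refine ⟨8 * Real.pi ^ 4 / K ^ 2 + (3 / 2) * (12 * K ^ 13 * Λ ^ 2) ^ 2 * K ^ 2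
    + 54 * (2 * K ^ 5 * Λ) ^ 4 * K ^ 6, by positivity, ?_⟩
  intro φ hφ hKb hΛb w
  -- basic facts about φ
  have hφpos : ∀ x, 0 < φ x := fun x => lt_of_lt_of_le (by positivity) (hKb x).1
  have hφub : ∀ x, φ x ≤ K := fun x => (hKb x).2
  have hφlb : ∀ x, 1 / K ≤ φ x := fun x => (hKb x).1
  set dφ : ℝ → ℝ := deriv φ with hdφdef
  set ddφ : ℝ → ℝ := iteratedDeriv 2 φ with hddφdef
  have hdφb : ∀ x, |dφ x| ≤ Λ := fun x =>
    le_trans (le_add_of_nonneg_right (abs_nonneg _)) (hΛb x x)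
  have hddφb : ∀ y, |ddφ y| ≤ Λ := fun y =>
    le_trans (le_add_of_nonneg_left (abs_nonneg _)) (hΛb y y)
  have hφd : ∀ x, HasDerivAt φ (dφ x) x := fun x =>
    ((hφ.differentiable (by norm_num)) x).hasDerivAt
  have h21 : iteratedDeriv 2 φ = deriv (deriv φ) := by
    rw [show (2:ℕ) = 1 + 1 from rfl, iteratedDeriv_succ, iteratedDeriv_one]
  have hdφdiff : Differentiable ℝ (deriv φ) := by
    have h := hφ.differentiable_iteratedDeriv 1 (by norm_num)
    rwa [iteratedDeriv_one] at h
  have hdφd : ∀ x, HasDerivAt dφ (ddφ x) x := fun x => by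
    have h := (hdφdiff x).hasDerivAt
    rw [hddφdef, h21]
    exact h
  -- continuity
  have hφc : Continuous φ := hφ.continuous
  have hdφc : Continuous dφ := hφ.continuous_deriv (by norm_num)
  have hddφc : Continuous ddφ := hφ.continuous_iteratedDeriv 2 (by norm_num)
  -- the weight ψ and its derivatives
  set ψ : ℝ → ℝ := fun x => (φ x ^ 2)⁻¹ with hψdef
  set dψ : ℝ → ℝ := fun x => -(2 * (φ x * dφ x)) / (φ x ^ 2) ^ 2 with hdψdef
  set ddψ : ℝ → ℝ :=
    fun x => (6 * dφ x ^ 2 * φ x ^ 4 - 2 * φ x ^ 5 * ddφ x) / φ x ^ 8 with hddψdef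
  have hψd : ∀ x, HasDerivAt ψ (dψ x) x := by
    intro x
    have h := ((hφd x).pow 2).inv (pow_ne_zero 2 (hφpos x).ne')
    refine h.congr_deriv ?_
    rw [hdψdef, Pi.pow_apply]
    push_cast
    ring
  have hψdd : ∀ x, HasDerivAt dψ (ddψ x) x := by
    intro x
    have hN : HasDerivAt (fun y => -(2 * (φ y * dφ y)))
        (-(2 * (dφ x * dφ x + φ x * ddφ x))) x :=
      (((hφd x).mul (hdφd x)).const_mul 2).neg
    have hD : HasDerivAt (fun y => (φ y ^ 2) ^ 2)
        ((2:ℕ) * (φ x ^ 2) ^ (2 - 1) * ((2:ℕ) * φ x ^ (2 - 1) * dφ x)) x :=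
      ((hφd x).pow 2).pow 2
    have h := hN.div hD (pow_ne_zero 2 (pow_ne_zero 2 (hφpos x).ne'))
    refine h.congr_deriv ?_
    rw [hddψdef]
    have hne := (hφpos x).ne'
    field_simp
    ring
  -- continuity of ψ, dψ, ddψ
  have hψc : Continuous ψ := (hφc.pow 2).inv₀ fun x => pow_ne_zero 2 (hφpos x).ne'
  have hdψc : Continuous dψ :=
    ((continuous_const.mul (hφc.mul hdφc)).neg).div ((hφc.pow 2).pow 2)
      (fun x => pow_ne_zero 2 (pow_ne_zero 2 (hφpos x).ne'))
  have hddψc : Continuous ddψ :=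
    (((continuous_const.mul (hdφc.pow 2)).mul (hφc.pow 4)).sub
      ((continuous_const.mul (hφc.pow 5)).mul hddφc)).div (hφc.pow 8)
      (fun x => pow_ne_zero 8 (hφpos x).ne')
  -- bounds on ψ, dψ, ddψ
  have hψub : ∀ x, ψ x ≤ K ^ 2 := by
    intro x
    rw [hψdef]
    have h1 : (1 / K) ^ 2 ≤ φ x ^ 2 :=
      pow_le_pow_left₀ (by positivity) (hφlb x) 2
    have h2 : ((1 / K) ^ 2)⁻¹ = K ^ 2 := by field_simp
    calc (φ x ^ 2)⁻¹ ≤ ((1 / K) ^ 2)⁻¹ := by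
          apply inv_anti₀ (by positivity) h1
      _ = K ^ 2 := h2
  have hψlb : ∀ x, (K ^ 2)⁻¹ ≤ ψ x := by
    intro x
    rw [hψdef]
    have h1 : φ x ^ 2 ≤ K ^ 2 := pow_le_pow_left₀ (hφpos x).le (hφub x) 2
    exact inv_anti₀ (pow_pos (hφpos x) 2) h1
  have hψabs : ∀ x, |ψ x| ≤ K ^ 2 := fun x => by
    rw [abs_of_pos (show (0:ℝ) < ψ x from inv_pos.mpr (pow_pos (hφpos x) 2))]
    exact hψub x
  have hdψabs : ∀ x, |dψ x| ≤ 2 * K ^ 5 * Λ := by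
    intro x
    rw [hdψdef]
    have hden : (0:ℝ) < (φ x ^ 2) ^ 2 := pow_pos (pow_pos (hφpos x) 2) 2
    rw [abs_div, abs_of_pos hden, div_le_iff₀ hden]
    have h1 : |(-(2 * (φ x * dφ x)))| ≤ 2 * K * Λ := by
      rw [abs_neg, abs_mul, abs_mul, abs_of_pos (hφpos x), show |(2:ℝ)| = 2 from by norm_num]
      have := hdφb x
      have := hφub x
      have := abs_nonneg (dφ x)
      nlinarith [hφpos x]
    have h2 : ((1 / K) ^ 2) ^ 2 ≤ (φ x ^ 2) ^ 2 :=
      pow_le_pow_left₀ (by positivity) (pow_le_pow_left₀ (by positivity) (hφlb x) 2) 2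
    have h3 : 2 * K * Λ = 2 * K ^ 5 * Λ * ((1 / K) ^ 2) ^ 2 := by
      field_simp
    calc |(-(2 * (φ x * dφ x)))| ≤ 2 * K * Λ := h1
      _ = 2 * K ^ 5 * Λ * ((1 / K) ^ 2) ^ 2 := h3
      _ ≤ 2 * K ^ 5 * Λ * (φ x ^ 2) ^ 2 := by
          apply mul_le_mul_of_nonneg_left h2 (by positivity)
  have hddψabs : ∀ x, |ddψ x| ≤ 12 * K ^ 13 * Λ ^ 2 := by
    intro x
    rw [hddψdef]
    have hden : (0:ℝ) < φ x ^ 8 := pow_pos (hφpos x) 8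
    rw [abs_div, abs_of_pos hden, div_le_iff₀ hden]
    have hb1 := abs_le.mp (hdφb x)
    have hb2 := abs_le.mp (hddφb x)
    have hdφ2 : dφ x ^ 2 ≤ Λ ^ 2 := by
      rw [← _root_.sq_abs]
      exact pow_le_pow_left₀ (abs_nonneg _) (hdφb x) 2
    have hφ4 : φ x ^ 4 ≤ K ^ 4 := pow_le_pow_left₀ (hφpos x).le (hφub x) 4
    have hφ5 : φ x ^ 5 ≤ K ^ 5 := pow_le_pow_left₀ (hφpos x).le (hφub x) 5
    have e1 : dφ x ^ 2 * φ x ^ 4 ≤ Λ ^ 2 * K ^ 4 :=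
      mul_le_mul hdφ2 hφ4 (by positivity) (by positivity)
    have e2 : φ x ^ 5 * ddφ x ≤ K ^ 5 * Λ := by
      calc φ x ^ 5 * ddφ x ≤ φ x ^ 5 * Λ :=
            mul_le_mul_of_nonneg_left hb2.2 (pow_pos (hφpos x) 5).le
        _ ≤ K ^ 5 * Λ := mul_le_mul_of_nonneg_right hφ5 hΛ0.le
    have e3 : -(K ^ 5 * Λ) ≤ φ x ^ 5 * ddφ x := by
      calc -(K ^ 5 * Λ) ≤ -(φ x ^ 5 * Λ) := by
            simp only [neg_le_neg_iff]
            exact mul_le_mul_of_nonneg_right hφ5 hΛ0.le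
        _ ≤ φ x ^ 5 * ddφ x := by
            have := mul_le_mul_of_nonneg_left hb2.1 (pow_pos (hφpos x) 5).le
            linarith [this]
    have step1 : |6 * dφ x ^ 2 * φ x ^ 4 - 2 * φ x ^ 5 * ddφ x| ≤ 12 * K ^ 5 * Λ ^ 2 := by
      rw [abs_le]
      have hK45 : K ^ 4 ≤ K ^ 5 := by nlinarith [pow_pos hK0 4, pow_nonneg hK0.le 4]
      have hΛsq : Λ ≤ Λ ^ 2 := by nlinarith
      constructor <;> nlinarith [e1, e2, e3, mul_nonneg (sq_nonneg (dφ x)) (by positivity : (0:ℝ) ≤ φ x ^ 4), pow_pos hK0 5, pow_pos hΛ0 2]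
    have step2 : 12 * K ^ 5 * Λ ^ 2 ≤ 12 * K ^ 13 * Λ ^ 2 * φ x ^ 8 := by
      have h8 : (1 / K) ^ 8 ≤ φ x ^ 8 := pow_le_pow_left₀ (by positivity) (hφlb x) 8
      have heq : 12 * K ^ 13 * Λ ^ 2 * (1 / K) ^ 8 = 12 * K ^ 5 * Λ ^ 2 := by
        field_simp
      calc 12 * K ^ 5 * Λ ^ 2 = 12 * K ^ 13 * Λ ^ 2 * (1 / K) ^ 8 := heq.symm
        _ ≤ 12 * K ^ 13 * Λ ^ 2 * φ x ^ 8 :=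
            mul_le_mul_of_nonneg_left h8 (by positivity)
    exact step1.trans step2
  -- Schwartz derivatives
  set W1 := SchwartzMap.derivCLM ℝ ℝ w with hW1
  set W2 := SchwartzMap.derivCLM ℝ ℝ W1 with hW2
  set W3 := SchwartzMap.derivCLM ℝ ℝ W2 with hW3
  set W4 := SchwartzMap.derivCLM ℝ ℝ W3 with hW4
  have hderiv1 : deriv ⇑w = ⇑W1 := funext fun x => (SchwartzMap.derivCLM_apply ℝ w x).symm
  have hderiv2 : deriv ⇑W1 = ⇑W2 := funext fun x => (SchwartzMap.derivCLM_apply ℝ W1 x).symm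
  have hderiv3 : deriv ⇑W2 = ⇑W3 := funext fun x => (SchwartzMap.derivCLM_apply ℝ W2 x).symm
  have hderiv4 : deriv ⇑W3 = ⇑W4 := funext fun x => (SchwartzMap.derivCLM_apply ℝ W3 x).symm
  have hiter : iteratedDeriv 4 ⇑w = ⇑W4 := by
    rw [show (4:ℕ) = 0+1+1+1+1 from rfl, iteratedDeriv_succ, iteratedDeriv_succ,
      iteratedDeriv_succ, iteratedDeriv_succ, iteratedDeriv_zero, hderiv1, hderiv2,
      hderiv3, hderiv4]
  -- the three basic integrals
  set I0 := ∫ x : ℝ, (w x) ^ 2 with hI0def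
  set I1 := ∫ x : ℝ, (W1 x) ^ 2 with hI1def
  set I2 := ∫ x : ℝ, (W2 x) ^ 2 with hI2def
  have hI0nn : 0 ≤ I0 := by rw [hI0def]; exact integral_nonneg fun x => sq_nonneg _
  have hI1nn : 0 ≤ I1 := by rw [hI1def]; exact integral_nonneg fun x => sq_nonneg _
  have hI2nn : 0 ≤ I2 := by rw [hI2def]; exact integral_nonneg fun x => sq_nonneg _
  -- integrable products
  have hIψ : ∀ f g : 𝓢(ℝ, ℝ), Integrable (fun x => ψ x * (f x * g x)) := fun f g =>
    int_bmul hψc.aestronglyMeasurable hψabs f g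
  have hIdψ : ∀ f g : 𝓢(ℝ, ℝ), Integrable (fun x => dψ x * (f x * g x)) := fun f g =>
    int_bmul hdψc.aestronglyMeasurable hdψabs f g
  have hIddψ : ∀ f g : 𝓢(ℝ, ℝ), Integrable (fun x => ddψ x * (f x * g x)) := fun f g =>
    int_bmul hddψc.aestronglyMeasurable hddψabs f g
  -- integration by parts, twice
  have h1a : Integrable (fun x => (ψ x * w x) * W4 x) :=
    (hIψ w W4).congr (Filter.Eventually.of_forall fun x => by simp only [hψdef, hdψdef, hddψdef, Pi.add_apply]; ring)
  have h1b : Integrable (fun x => (dψ x * w x + ψ x * W1 x) * W3 x) :=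
    ((hIdψ w W3).add (hIψ W1 W3)).congr (Filter.Eventually.of_forall fun x => by simp only [hψdef, hdψdef, hddψdef, Pi.add_apply]; ring)
  have h1c : Integrable (fun x => (ψ x * w x) * W3 x) :=
    (hIψ w W3).congr (Filter.Eventually.of_forall fun x => by simp only [hψdef, hdψdef, hddψdef, Pi.add_apply]; ring)
  have E1 : ∫ x : ℝ, (ψ x * w x) * W4 x = -∫ x : ℝ, (dψ x * w x + ψ x * W1 x) * W3 x :=
    ibp (fun x => (hψd x).mul (hasDerivAt_schwartz w x))
      (fun x => hasDerivAt_schwartz W3 x) h1a h1b h1c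
  have h2b : Integrable (fun x =>
      ((ddψ x * w x + dψ x * W1 x) + (dψ x * W1 x + ψ x * W2 x)) * W2 x) :=
    (((hIddψ w W2).add (hIdψ W1 W2)).add ((hIdψ W1 W2).add (hIψ W2 W2))).congr
      (Filter.Eventually.of_forall fun x => by simp only [hψdef, hdψdef, hddψdef, Pi.add_apply]; ring)
  have h2c : Integrable (fun x => (dψ x * w x + ψ x * W1 x) * W2 x) :=
    ((hIdψ w W2).add (hIψ W1 W2)).congr (Filter.Eventually.of_forall fun x => by simp only [hψdef, hdψdef, hddψdef, Pi.add_apply]; ring)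
  have E2 : ∫ x : ℝ, (dψ x * w x + ψ x * W1 x) * W3 x
      = -∫ x : ℝ, ((ddψ x * w x + dψ x * W1 x) + (dψ x * W1 x + ψ x * W2 x)) * W2 x :=
    ibp (fun x => ((hψdd x).mul (hasDerivAt_schwartz w x)).add
        ((hψd x).mul (hasDerivAt_schwartz W1 x)))
      (fun x => hasDerivAt_schwartz W2 x) h1b h2b h2c
  have E3 : ∫ x : ℝ, w x * W2 x = -∫ x : ℝ, W1 x * W1 x :=
    ibp (fun x => hasDerivAt_schwartz w x) (fun x => hasDerivAt_schwartz W1 x)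
      (int_mul w W2) (int_mul W1 W1) (int_mul w W1)
  -- split the main integral
  set J1 := ∫ x : ℝ, ddψ x * (w x * W2 x) with hJ1def
  set J2 := ∫ x : ℝ, dψ x * (W1 x * W2 x) with hJ2def
  set J3 := ∫ x : ℝ, ψ x * (W2 x * W2 x) with hJ3def
  have hsplit : ∫ x : ℝ, ((ddψ x * w x + dψ x * W1 x) + (dψ x * W1 x + ψ x * W2 x)) * W2 x
      = J1 + (J2 + (J2 + J3)) := by
    have hre : (fun x : ℝ => ((ddψ x * w x + dψ x * W1 x) + (dψ x * W1 x + ψ x * W2 x)) * W2 x)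
        = fun x : ℝ => ddψ x * (w x * W2 x)
            + (dψ x * (W1 x * W2 x) + (dψ x * (W1 x * W2 x) + ψ x * (W2 x * W2 x))) := by
      funext x
      simp only [hψdef, hdψdef, hddψdef]
      ring
    have hadd23 : Integrable (fun x : ℝ => dψ x * (W1 x * W2 x) + ψ x * (W2 x * W2 x)) :=
      (hIdψ W1 W2).add (hIψ W2 W2)
    have hadd223 : Integrable (fun x : ℝ =>
        dψ x * (W1 x * W2 x) + (dψ x * (W1 x * W2 x) + ψ x * (W2 x * W2 x))) :=
      (hIdψ W1 W2).add hadd23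
    have s1 : ∫ x : ℝ, (ddψ x * (w x * W2 x)
          + (dψ x * (W1 x * W2 x) + (dψ x * (W1 x * W2 x) + ψ x * (W2 x * W2 x))))
        = J1 + ∫ x : ℝ, (dψ x * (W1 x * W2 x)
          + (dψ x * (W1 x * W2 x) + ψ x * (W2 x * W2 x))) :=
      integral_add (hIddψ w W2) hadd223
    have s2 : ∫ x : ℝ, (dψ x * (W1 x * W2 x) + (dψ x * (W1 x * W2 x) + ψ x * (W2 x * W2 x)))
        = J2 + ∫ x : ℝ, (dψ x * (W1 x * W2 x) + ψ x * (W2 x * W2 x)) :=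
      integral_add (hIdψ W1 W2) hadd23
    have s3 : ∫ x : ℝ, (dψ x * (W1 x * W2 x) + ψ x * (W2 x * W2 x)) = J2 + J3 :=
      integral_add (hIdψ W1 W2) (hIψ W2 W2)
    rw [hre, s1, s2, s3]
  have hLHS : -(∫ x : ℝ, (φ x ^ 2)⁻¹ * iteratedDeriv 4 (⇑w) x * w x)
      = -(J1 + (J2 + (J2 + J3))) := by
    have h0 : (∫ x : ℝ, (φ x ^ 2)⁻¹ * iteratedDeriv 4 (⇑w) x * w x)
        = ∫ x : ℝ, (ψ x * w x) * W4 x := by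
      congr 1
      funext x
      rw [show iteratedDeriv 4 (⇑w) x = W4 x from congrFun hiter x]
      simp only [hψdef]
      ring
    rw [h0, E1, E2, hsplit]
    ring
  -- lower bound for J3
  have hJ3lb : (K ^ 2)⁻¹ * I2 ≤ J3 := by
    have e : (K ^ 2)⁻¹ * I2 = ∫ x : ℝ, (K ^ 2)⁻¹ * (W2 x) ^ 2 := by
      rw [hI2def]; exact (integral_const_mul _ _).symm
    rw [e, hJ3def]
    apply integral_mono ((sq_int W2).const_mul _) (hIψ W2 W2)
    intro x
    dsimp only
    nlinarith [mul_le_mul_of_nonneg_right (hψlb x) (sq_nonneg (W2 x))]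
  -- upper bounds for J1, J2 and interpolation for I1
  have hJ1b : |J1| ≤ (K ^ 2)⁻¹ / 6 * I2 + (3 / 2) * (12 * K ^ 13 * Λ ^ 2) ^ 2 * K ^ 2 * I0 := by
    have h := Jbound (Cb := 12 * K ^ 13 * Λ ^ 2) (by positivity)
      hddψc.aestronglyMeasurable hddψabs w W2
      (m := (K ^ 2)⁻¹ / (3 * (12 * K ^ 13 * Λ ^ 2))) (by positivity)
    rw [← hI2def, ← hI0def] at h
    rw [hJ1def]
    refine h.trans (le_of_eq ?_)
    field_simp
    ring
  have hJ2b : |J2| ≤ (K ^ 2)⁻¹ / 12 * I2 + 3 * (2 * K ^ 5 * Λ) ^ 2 * K ^ 2 * I1 := by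
    have h := Jbound (Cb := 2 * K ^ 5 * Λ) (by positivity)
      hdψc.aestronglyMeasurable hdψabs W1 W2
      (m := (K ^ 2)⁻¹ / (6 * (2 * K ^ 5 * Λ))) (by positivity)
    rw [← hI2def, ← hI1def] at h
    rw [hJ2def]
    refine h.trans (le_of_eq ?_)
    field_simp
    ring
  have hI1b : I1 ≤ (K ^ 4)⁻¹ / (36 * (2 * K ^ 5 * Λ) ^ 2) * I2
      + 9 * (2 * K ^ 5 * Λ) ^ 2 * K ^ 4 * I0 := by
    have hI1eq : I1 = -∫ x : ℝ, w x * W2 x := by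
      rw [hI1def]
      rw [show (fun x : ℝ => (W1 x) ^ 2) = fun x : ℝ => W1 x * W1 x from funext fun x => by ring]
      rw [E3, neg_neg]
    have habs : I1 ≤ |∫ x : ℝ, w x * W2 x| := by
      rw [hI1eq]; exact neg_le_abs _
    have h := Jbound (b := fun _ : ℝ => (1:ℝ)) (Cb := 1) one_pos.le
      aestronglyMeasurable_const (fun x => by norm_num) w W2
      (m := (K ^ 4)⁻¹ / (18 * (2 * K ^ 5 * Λ) ^ 2)) (by positivity)
    simp only [one_mul] at h
    rw [← hI2def, ← hI0def] at h
    refine habs.trans (h.trans (le_of_eq ?_))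
    field_simp
    ring
  have hJ2c : |J2| ≤ (K ^ 2)⁻¹ / 12 * I2
      + ((K ^ 2)⁻¹ / 12 * I2 + 27 * (2 * K ^ 5 * Λ) ^ 4 * K ^ 6 * I0) := by
    have hmul := mul_le_mul_of_nonneg_left hI1b
      (by positivity : (0:ℝ) ≤ 3 * (2 * K ^ 5 * Λ) ^ 2 * K ^ 2)
    have heq : 3 * (2 * K ^ 5 * Λ) ^ 2 * K ^ 2 * ((K ^ 4)⁻¹ / (36 * (2 * K ^ 5 * Λ) ^ 2) * I2
        + 9 * (2 * K ^ 5 * Λ) ^ 2 * K ^ 4 * I0)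
        = (K ^ 2)⁻¹ / 12 * I2 + 27 * (2 * K ^ 5 * Λ) ^ 4 * K ^ 6 * I0 := by
      field_simp
      ring
    linarith [hJ2b, hmul, heq]
  -- Fourier side
  have hH2 := sobolev2_le w
  rw [← hW1, ← hW2, ← hI0def, ← hI2def] at hH2
  have hH0 := sobolev0_eq w
  rw [← hI0def] at hH0
  have h8 : 8 * Real.pi ^ 4 * sobolevNorm 2 ⇑w ^ 2 ≤ 16 * Real.pi ^ 4 * I0 + I2 := by
    have hmul := mul_le_mul_of_nonneg_left hH2 (by positivity : (0:ℝ) ≤ 8 * Real.pi ^ 4)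
    have heq : 8 * Real.pi ^ 4 * (2 * I0 + 1 / (8 * Real.pi ^ 4) * I2)
        = 16 * Real.pi ^ 4 * I0 + I2 := by
      field_simp
      ring
    linarith [hmul, heq]
  have h9 := mul_le_mul_of_nonneg_left h8 (by positivity : (0:ℝ) ≤ (K ^ 2)⁻¹ / 2)
  rw [hLHS, hH0, div_eq_mul_inv, div_eq_mul_inv]
  set e := (K ^ 2)⁻¹ with he
  linarith [hJ1b, hJ2c, hJ3lb, h9, neg_abs_le J1, neg_abs_le J2]

end Main

end KdVPaper
end
end

section
/- Let T′ > 0, let C₁ : [0,∞)² → [1,∞) and C₂ : [0,∞)² → [1,∞) be increasing in each argument, and let C₃, C₄ : [0,∞) → [1,∞) be increasing. Let M : [0,T′] → [0,∞) be continuous and k : [0,T′] → [0,∞) be any function, and assume: (i) for every t ∈ [0,T′] with t·C₁(M(t), k(0)) < 1, k(t) ≤ k(0)/(1 − t·C₁(M(t), k(0))) + t·C₃(M(t)); (ii) for every t ∈ [0,T′], M(t) ≤ C₂(k(t), t·C₄(M(t))) · (M(0) + t·C₄(M(t))). Define M̄ := 2·C₂(4k(0), 4k(0))·(M(0) + 2k(0))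 and T := min{ 2k(0)/C₃(2M̄), 1/(2·C₁(2M̄, k(0))), 2k(0)/C₄(2M̄) }. Then for every t ∈ [0,T′], if M(t) > M̄ then t > T. -/
open MeasureTheory Set Filter
open scoped Topology ENNReal

noncomputable section

namespace KdVPaper

/-- Abstract bootstrap: under the two a priori inequalities, if
`M(t) > M̄` then `t > T`, where `M̄ = 2C₂(4k(0),4k(0))(M(0)+2k(0))` and
`T = min{2k(0)/C₃(2M̄), 1/(2C₁(2M̄,k(0))), 2k(0)/C₄(2M̄)}`. -/
theorem bootstrap_time_lower_bound (T' : ℝ) (hT' : 0 < T')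
    (C₁ C₂ : ℝ → ℝ → ℝ) (C₃ C₄ : ℝ → ℝ)
    (hC₁ : Incr2 C₁) (hC₂ : Incr2 C₂) (hC₃ : Incr1 C₃) (hC₄ : Incr1 C₄)
    (hC₁1 : ∀ a b, 1 ≤ C₁ a b) (hC₂1 : ∀ a b, 1 ≤ C₂ a b)
    (hC₃1 : ∀ a, 1 ≤ C₃ a) (hC₄1 : ∀ a, 1 ≤ C₄ a)
    (M k : ℝ → ℝ) (hMcont : ContinuousOn M (Icc 0 T'))
    (hMpos : ∀ t ∈ Icc (0:ℝ) T', 0 ≤ M t) (hkpos : ∀ t ∈ Icc (0:ℝ) T', 0 ≤ k t)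
    (hi : ∀ t ∈ Icc (0:ℝ) T', t * C₁ (M t) (k 0) < 1 →
      k t ≤ k 0 / (1 - t * C₁ (M t) (k 0)) + t * C₃ (M t))
    (hii : ∀ t ∈ Icc (0:ℝ) T', M t ≤ C₂ (k t) (t * C₄ (M t)) * (M 0 + t * C₄ (M t)))
    (Mb T : ℝ)
    (hMb : Mb = 2 * C₂ (4 * k 0) (4 * k 0) * (M 0 + 2 * k 0))
    (hT : T = min (2 * k 0 / C₃ (2 * Mb))
      (min (1 / (2 * C₁ (2 * Mb) (k 0))) (2 * k 0 / C₄ (2 * Mb)))) :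
    ∀ t ∈ Icc (0:ℝ) T', Mb < M t → T < t := by
  intro t ht hMt
  by_contra hTt
  push_neg at hTt
  have h0T' : (0:ℝ) ∈ Icc (0:ℝ) T' := ⟨le_refl 0, le_of_lt hT'⟩
  have hK : 0 ≤ k 0 := hkpos 0 h0T'
  have hM0 : 0 ≤ M 0 := hMpos 0 h0T'
  have hC2 : (1:ℝ) ≤ C₂ (4 * k 0) (4 * k 0) := hC₂1 _ _
  have hMb2 : 2 * (M 0 + 2 * k 0) ≤ Mb := by nlinarith
  have hMbnn : 0 ≤ Mb := by nlinarith
  have hM0Mb : M 0 ≤ Mb := by linarith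
  -- Case k 0 = 0 : then T ≤ 0 and t must be 0, contradiction.
  rcases eq_or_lt_of_le hK with hK0 | hKpos
  · have hT0 : T ≤ 0 := by
      rw [hT]
      refine le_trans (min_le_left _ _) ?_
      rw [← hK0]
      simp
    have ht0 : t = 0 := le_antisymm (le_trans hTt hT0) ht.1
    rw [ht0] at hMt
    linarith
  -- Main case: k 0 > 0.
  have hMbpos : 0 < Mb := by nlinarith
  -- IVT: find t* ∈ [0, t] with M t* = Mb.
  have htt' : Icc (0:ℝ) t ⊆ Icc 0 T' := Icc_subset_Icc (le_refl 0) ht.2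
  have hIVT : Mb ∈ M '' Icc (0:ℝ) t := by
    apply intermediate_value_Icc ht.1 (hMcont.mono htt')
    exact ⟨hM0Mb, le_of_lt hMt⟩
  obtain ⟨s, hs, hMs⟩ := hIVT
  have hsT' : s ∈ Icc (0:ℝ) T' := htt' hs
  have hsT : s ≤ T := le_trans hs.2 hTt
  have hs0 : 0 ≤ s := hs.1
  have hMs2 : M s ≤ 2 * Mb := by rw [hMs]; linarith
  have hMsnn : 0 ≤ M s := hMpos s hsT'
  have hMb2nn : (0:ℝ) ≤ 2 * Mb := by linarith
  -- bounds from the definition of T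
  have hc1 : (1:ℝ) ≤ C₁ (2 * Mb) (k 0) := hC₁1 _ _
  have hc3 : (1:ℝ) ≤ C₃ (2 * Mb) := hC₃1 _
  have hc4 : (1:ℝ) ≤ C₄ (2 * Mb) := hC₄1 _
  have hT1 : T ≤ 2 * k 0 / C₃ (2 * Mb) := hT ▸ min_le_left _ _
  have hT2 : T ≤ 1 / (2 * C₁ (2 * Mb) (k 0)) :=
    hT ▸ le_trans (min_le_right _ _) (min_le_left _ _)
  have hT3 : T ≤ 2 * k 0 / C₄ (2 * Mb) :=
    hT ▸ le_trans (min_le_right _ _) (min_le_right _ _)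
  -- monotonicity bounds at s
  have hmono1 : C₁ (M s) (k 0) ≤ C₁ (2 * Mb) (k 0) :=
    hC₁.2 (k 0) hK hMsnn hMb2nn hMs2
  have hmono3 : C₃ (M s) ≤ C₃ (2 * Mb) := hC₃ hMsnn hMb2nn hMs2
  have hmono4 : C₄ (M s) ≤ C₄ (2 * Mb) := hC₄ hMsnn hMb2nn hMs2
  have hc1s : (1:ℝ) ≤ C₁ (M s) (k 0) := hC₁1 _ _
  -- s * C₁ (M s) (k 0) ≤ 1/2
  have hsc1 : s * C₁ (M s) (k 0) ≤ 1 / 2 := by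
    have h1 : s ≤ 1 / (2 * C₁ (2 * Mb) (k 0)) := le_trans hsT hT2
    have h2 : s * (2 * C₁ (2 * Mb) (k 0)) ≤ 1 :=
      (le_div_iff₀ (by linarith : (0:ℝ) < 2 * C₁ (2 * Mb) (k 0))).mp h1
    nlinarith [mul_le_mul_of_nonneg_left hmono1 hs0]
  -- s * C₃ (M s) ≤ 2 k 0
  have hsc3 : s * C₃ (M s) ≤ 2 * k 0 := by
    have h1 : s ≤ 2 * k 0 / C₃ (2 * Mb) := le_trans hsT hT1
    have h2 : s * C₃ (2 * Mb) ≤ 2 * k 0 := by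
      rw [le_div_iff₀ (by linarith : (0:ℝ) < C₃ (2 * Mb))] at h1
      linarith
    nlinarith [mul_le_mul_of_nonneg_left hmono3 hs0]
  -- s * C₄ (M s) ≤ 2 k 0
  have hsc4 : s * C₄ (M s) ≤ 2 * k 0 := by
    have h1 : s ≤ 2 * k 0 / C₄ (2 * Mb) := le_trans hsT hT3
    have h2 : s * C₄ (2 * Mb) ≤ 2 * k 0 := by
      rw [le_div_iff₀ (by linarith : (0:ℝ) < C₄ (2 * Mb))] at h1
      linarith
    nlinarith [mul_le_mul_of_nonneg_left hmono4 hs0]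
  -- apply (i): k s ≤ 4 k 0
  have hks : k s ≤ 4 * k 0 := by
    have hlt : s * C₁ (M s) (k 0) < 1 := by linarith
    have hi' := hi s hsT' hlt
    have hden : (1:ℝ)/2 ≤ 1 - s * C₁ (M s) (k 0) := by linarith
    have hdiv : k 0 / (1 - s * C₁ (M s) (k 0)) ≤ 2 * k 0 := by
      rw [div_le_iff₀ (by linarith : (0:ℝ) < 1 - s * C₁ (M s) (k 0))]
      linarith [mul_le_mul_of_nonneg_left hden (by linarith : (0:ℝ) ≤ 2 * k 0)]
    linarith
  -- apply (ii)
  have hii' := hii s hsT'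
  set a := s * C₄ (M s) with ha
  have hann : 0 ≤ a := mul_nonneg hs0 (by linarith [hC₄1 (M s)] : (0:ℝ) ≤ C₄ (M s))
  have ha4 : a ≤ 4 * k 0 := by linarith
  have hksnn : 0 ≤ k s := hkpos s hsT'
  have hK4 : (0:ℝ) ≤ 4 * k 0 := by linarith
  have hm1 : C₂ (k s) a ≤ C₂ (4 * k 0) a := hC₂.2 a hann hksnn hK4 hks
  have hm2 : C₂ (4 * k 0) a ≤ C₂ (4 * k 0) (4 * k 0) := hC₂.1 (4 * k 0) hK4 hann hK4 ha4
  have hfac : 0 ≤ M 0 + a := by linarith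
  have hfinal : M s ≤ C₂ (4 * k 0) (4 * k 0) * (M 0 + 2 * k 0) := by
    calc M s ≤ C₂ (k s) a * (M 0 + a) := hii'
      _ ≤ C₂ (4 * k 0) (4 * k 0) * (M 0 + 2 * k 0) := by
          apply mul_le_mul (le_trans hm1 hm2) (by linarith) hfac (by linarith)
  rw [hMs] at hfinal
  have h2Mb : 2 * (C₂ (4 * k 0) (4 * k 0) * (M 0 + 2 * k 0)) = Mb := by rw [hMb]; ring
  linarith

end KdVPaper
end
end
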